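/- Let k → A and k → B be homomorphisms of commutative rings, and let α : A ⊗_k A → (A ⊗_k B) ⊗_k (A ⊗_k B) and β : B ⊗_k B → (A ⊗_k B) ⊗_k (A ⊗_k B) be the canonical ring maps given by a ⊗ a' ↦ (a ⊗ 1) ⊗ (a' ⊗ 1) and b ⊗ b' ↦ (1 ⊗ b) ⊗ (1 ⊗ b'). Then: (i) the diagonal ideal I_{(A⊗_kB)/k} is generated by α(I_{A/k}) ∪ β(I_{B/k}); and (ii) for every natural number N, writing J_N for the ideal of (A ⊗_k B) ⊗_k (A ⊗_k B) generated by α(I_{A/k}^{N+1}) ∪ β(I_{B/k}^{N+1}), one has the inclusions I_{(A⊗_kB)/k}^{2N+1} ⊆ J_N ⊆ I_{(A⊗_kB)/k}^{N+1}. -/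

import Mathlib

/-!
Basic infrastructure for jet algebras and jet modules, following the paper
"Basics of jet modules and algebraic linear differential operators".

For a ring homomorphism `k → A`, the diagonal ideal `I_{A/k} ⊆ A ⊗[k] A` is the kernel of
the multiplication map; the `N`-th jet algebra is `J^N(A/k) = (A ⊗[k] A) ⧸ I_{A/k}^{N+1}`,
with its two `A`-algebra structure maps `p₁ : a ↦ a ⊗ 1` and `p₂ : a ↦ 1 ⊗ a`.
For an `A`-module `M`, `A ⊗[k] M` is a module over `A ⊗[k] A` via
`(a ⊗ b) • (x ⊗ m) = (a * x) ⊗ (b • m)`, and the `N`-th jet module is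
`J^N(M/k) = (A ⊗[k] M) ⧸ I_{A/k}^{N+1} · (A ⊗[k] M)`, a module over `J^N(A/k)`,
equipped with the universal filtered derivation `d^N : M → J^N(M/k)`, `m ↦ [1 ⊗ m]`.
-/

open scoped TensorProduct

namespace JetPaper

section Bimodule

variable (R B C M P : Type*) [CommRing R]
  [CommRing B] [Algebra R B] [CommRing C] [Algebra R C]
  [AddCommGroup M] [Module R M] [Module B M] [IsScalarTower R B M]
  [AddCommGroup P] [Module R P] [Module C P] [IsScalarTower R C P]

/-- The action of `C` on `M ⊗[R] P` through the right-hand factor, as an algebra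
homomorphism into endomorphisms. -/
noncomputable def rightSMulEnd : C →ₐ[R] Module.End R (M ⊗[R] P) where
  toFun c := LinearMap.lTensor M (Algebra.lsmul R R P c)
  map_one' := LinearMap.ext fun x => by
    induction x using TensorProduct.induction_on with
    | zero => simp
    | tmul m p => simp
    | add u v hu hv => simp only [map_add, hu, hv]
  map_mul' c c' := LinearMap.ext fun x => by
    induction x using TensorProduct.induction_on with
    | zero => simp
    | tmul m p => simp [mul_smul, Module.End.mul_apply]
    | add u v hu hv => simp only [map_add, Module.End.mul_apply] at hu hv ⊢; rw [hu, hv]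
  map_zero' := LinearMap.ext fun x => by
    induction x using TensorProduct.induction_on with
    | zero => simp
    | tmul m p => simp
    | add u v hu hv => simp only [map_add, hu, hv]
  map_add' c c' := LinearMap.ext fun x => by
    induction x using TensorProduct.induction_on with
    | zero => simp
    | tmul m p => simp [add_smul, TensorProduct.tmul_add]
    | add u v hu hv =>
        simp only [map_add, LinearMap.add_apply] at hu hv ⊢
        rw [hu, hv]
  commutes' r := LinearMap.ext fun x => by
    induction x using TensorProduct.induction_on with
    | zero => simp
    | tmul m p =>
        simp only [LinearMap.lTensor_tmul, Algebra.lsmul_coe,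
          Module.algebraMap_end_apply, algebraMap_smul]
        rw [TensorProduct.tmul_smul]
    | add u v hu hv => simp only [map_add, hu, hv]

@[simp] lemma rightSMulEnd_tmul (c : C) (m : M) (p : P) :
    rightSMulEnd R C M P c (m ⊗ₜ[R] p) = m ⊗ₜ[R] (c • p) := by
  simp [rightSMulEnd]

/-- The algebra homomorphism `B ⊗[R] C → End (M ⊗[R] P)` realizing the natural
bimodule structure `(b ⊗ c) • (m ⊗ p) = (b • m) ⊗ (c • p)`. -/
noncomputable def bimodMap : (B ⊗[R] C) →ₐ[R] Module.End R (M ⊗[R] P) :=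
  Algebra.TensorProduct.lift (Algebra.lsmul R R (M ⊗[R] P)) (rightSMulEnd R C M P)
    (fun b c => LinearMap.ext fun x => by
      induction x using TensorProduct.induction_on with
      | zero => simp [Module.End.mul_apply]
      | tmul m p => simp [Module.End.mul_apply, TensorProduct.smul_tmul']
      | add u v hu hv =>
          simp only [Module.End.mul_apply] at hu hv ⊢
          simp only [map_add, hu, hv])

/-- The `B ⊗[R] C`-module structure on `M ⊗[R] P`, where `B` acts through the left factor
and `C` through the right one. -/
noncomputable def bimodule : Module (B ⊗[R] C) (M ⊗[R] P) :=
  Module.compHom _ (bimodMap R B C M P).toRingHom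

/-- The action of `C` on `M ⊗[R] P` through the right-hand factor, as a module structure. -/
noncomputable def rightTensorModule : Module C (M ⊗[R] P) :=
  Module.compHom _ (rightSMulEnd R C M P).toRingHom

end Bimodule

section BiTensorDef

/-- Type synonym for `M ⊗[R] P`, regarded as a module over `B ⊗[R] C`, where `B` acts
through the left factor and `C` through the right factor. -/
@[nolint unusedArguments]
def BiTensor (R B C M P : Type*) [CommRing R]
    [CommRing B] [Algebra R B] [CommRing C] [Algebra R C]
    [AddCommGroup M] [Module R M] [Module B M] [IsScalarTower R B M]
    [AddCommGroup P] [Module R P] [Module C P] [IsScalarTower R C P] : Type _ :=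
  M ⊗[R] P

variable (R B C M P : Type*) [CommRing R]
  [CommRing B] [Algebra R B] [CommRing C] [Algebra R C]
  [AddCommGroup M] [Module R M] [Module B M] [IsScalarTower R B M]
  [AddCommGroup P] [Module R P] [Module C P] [IsScalarTower R C P]

/-- The canonical (identity) map `M ⊗[R] P → BiTensor R B C M P`. -/
def BiTensor.of : M ⊗[R] P → BiTensor R B C M P := id

noncomputable instance : AddCommGroup (BiTensor R B C M P) :=
  inferInstanceAs (AddCommGroup (M ⊗[R] P))

noncomputable instance : Module R (BiTensor R B C M P) :=
  inferInstanceAs (Module R (M ⊗[R] P))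

noncomputable instance : Module (B ⊗[R] C) (BiTensor R B C M P) := bimodule R B C M P

noncomputable instance : Module C (BiTensor R B C M P) := rightTensorModule R C M P

lemma BiTensor.smul_of (b : B) (c : C) (m : M) (p : P) :
    (b ⊗ₜ[R] c : B ⊗[R] C) • BiTensor.of R B C M P (m ⊗ₜ[R] p) =
      BiTensor.of R B C M P ((b • m) ⊗ₜ[R] (c • p)) := by
  show bimodMap R B C M P (b ⊗ₜ[R] c) (m ⊗ₜ[R] p) = _
  rw [show bimodMap R B C M P (b ⊗ₜ[R] c) = Algebra.lsmul R R (M ⊗[R] P) b * rightSMulEnd R C M P c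
    from Algebra.TensorProduct.lift_tmul ..]
  simp only [Module.End.mul_apply, TensorProduct.smul_tmul', rightSMulEnd_tmul,
    Algebra.lsmul_coe]
  rfl

lemma BiTensor.rsmul_of (c : C) (m : M) (p : P) :
    c • BiTensor.of R B C M P (m ⊗ₜ[R] p) = BiTensor.of R B C M P (m ⊗ₜ[R] (c • p)) := by
  show rightSMulEnd R C M P c (m ⊗ₜ[R] p) = _
  simp only [rightSMulEnd_tmul]
  rfl

attribute [local instance] Algebra.TensorProduct.rightAlgebra in
instance : IsScalarTower C (B ⊗[R] C) (BiTensor R B C M P) := by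
  refine IsScalarTower.of_algebraMap_smul
    (R := C) (A := B ⊗[R] C) (M := BiTensor R B C M P) fun c x => ?_
  have halg : algebraMap C (B ⊗[R] C) c = (1 : B) ⊗ₜ[R] c := rfl
  have key : ∀ y : M ⊗[R] P,
      ((1 : B) ⊗ₜ[R] c : B ⊗[R] C) • BiTensor.of R B C M P y =
        c • BiTensor.of R B C M P y := by
    intro y
    induction y using TensorProduct.induction_on with
    | zero =>
        show ((1 : B) ⊗ₜ[R] c : B ⊗[R] C) • (0 : BiTensor R B C M P) =
          c • (0 : BiTensor R B C M P)
        rw [smul_zero, smul_zero]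
    | tmul m p => rw [BiTensor.smul_of, one_smul, BiTensor.rsmul_of]
    | add u v hu hv =>
        have hadd : ∀ u v : M ⊗[R] P, BiTensor.of R B C M P (u + v) =
            BiTensor.of R B C M P u + BiTensor.of R B C M P v := fun _ _ => rfl
        rw [hadd, smul_add, smul_add, hu, hv]
  rw [halg]
  exact key x

end BiTensorDef

section JetDef

variable (k A : Type*) [CommRing k] [CommRing A] [Algebra k A]

/-- The diagonal ideal `I_{A/k} ⊆ A ⊗[k] A`: the kernel of the multiplication map. -/
noncomputable abbrev diagIdeal : Ideal (A ⊗[k] A) := KaehlerDifferential.ideal k A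

/-- The `N`-th jet algebra `J^N(A/k) = (A ⊗[k] A) ⧸ I_{A/k}^{N+1}`. -/
noncomputable abbrev JetAlg (N : ℕ) : Type _ :=
  (A ⊗[k] A) ⧸ (diagIdeal k A ^ (N + 1))

/-- The first `A`-algebra structure map `p₁ : A → J^N(A/k)`, `a ↦ a ⊗ 1`. -/
noncomputable def jetP1 (N : ℕ) : A →+* JetAlg k A N :=
  (Ideal.Quotient.mk _).comp Algebra.TensorProduct.includeLeftRingHom

/-- The second `A`-algebra structure map `p₂ : A → J^N(A/k)`, `a ↦ 1 ⊗ a`. -/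
noncomputable def jetP2 (N : ℕ) : A →+* JetAlg k A N :=
  (Ideal.Quotient.mk _).comp (Algebra.TensorProduct.includeRight : A →ₐ[k] A ⊗[k] A).toRingHom

variable (M : Type*) [AddCommGroup M] [Module k M] [Module A M] [IsScalarTower k A M]

/-- `A ⊗[k] M` is a module over `A ⊗[k] A` via `(a ⊗ b) • (x ⊗ m) = (a * x) ⊗ (b • m)`. -/
noncomputable instance jetTensorModule : Module (A ⊗[k] A) (A ⊗[k] M) :=
  bimodule k A A A M

@[simp] lemma jet_smul_tmul (a b x : A) (m : M) :
    (a ⊗ₜ[k] b : A ⊗[k] A) • (x ⊗ₜ[k] m : A ⊗[k] M) = (a * x) ⊗ₜ[k] (b • m) := by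
  show bimodMap k A A A M (a ⊗ₜ[k] b) (x ⊗ₜ[k] m) = _
  rw [show bimodMap k A A A M (a ⊗ₜ[k] b) = Algebra.lsmul k k (A ⊗[k] M) a * rightSMulEnd k A A M b
    from Algebra.TensorProduct.lift_tmul ..]
  simp [Module.End.mul_apply, TensorProduct.smul_tmul', smul_eq_mul]

instance jetTower1 : IsScalarTower A (A ⊗[k] A) (A ⊗[k] M) :=
  IsScalarTower.of_algebraMap_smul fun a x => by
    have halg : algebraMap A (A ⊗[k] A) a = a ⊗ₜ[k] (1 : A) := rfl
    rw [halg]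
    induction x using TensorProduct.induction_on with
    | zero => simp
    | tmul y m => rw [jet_smul_tmul, TensorProduct.smul_tmul']; simp
    | add u v hu hv => rw [smul_add, hu, hv, smul_add]

instance jetTower0 : IsScalarTower k (A ⊗[k] A) (A ⊗[k] M) :=
  IsScalarTower.of_algebraMap_smul fun r x => by
    rw [IsScalarTower.algebraMap_apply k A (A ⊗[k] A), algebraMap_smul, algebraMap_smul]

/-- The `N`-th jet module `J^N(M/k) = (A ⊗[k] M) ⧸ I_{A/k}^{N+1}·(A ⊗[k] M)`;
it is a module over `J^N(A/k)`. -/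
noncomputable abbrev JetMod (N : ℕ) : Type _ :=
  (A ⊗[k] M) ⧸ ((diagIdeal k A ^ (N + 1)) • (⊤ : Submodule (A ⊗[k] A) (A ⊗[k] M)))

/-- The universal (filtered) derivation `d^N_{M/k} : M → J^N(M/k)`, `m ↦ [1 ⊗ m]`. -/
noncomputable def jetD (N : ℕ) : M → JetMod k A M N :=
  fun m => Submodule.Quotient.mk ((1 : A) ⊗ₜ[k] m)

instance jetModTower (N : ℕ) : IsScalarTower k A (JetMod k A M N) :=
  IsScalarTower.of_algebraMap_smul fun r x => by
    obtain ⟨y, rfl⟩ := Submodule.Quotient.mk_surjective _ x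
    rw [← Submodule.Quotient.mk_smul, ← Submodule.Quotient.mk_smul, algebraMap_smul]

instance jetQuotTower (N : ℕ) : IsScalarTower A (JetAlg k A N) (JetMod k A M N) := by
  refine IsScalarTower.of_algebraMap_smul
    (R := A) (A := JetAlg k A N) (M := JetMod k A M N) fun a x => ?_
  obtain ⟨y, rfl⟩ := Submodule.Quotient.mk_surjective _ x
  have h1 : algebraMap A (JetAlg k A N) a • (Submodule.Quotient.mk y : JetMod k A M N) =
      Submodule.Quotient.mk ((algebraMap A (A ⊗[k] A) a) • y) := rfl
  rw [h1, algebraMap_smul (A ⊗[k] A) a y, Submodule.Quotient.mk_smul]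

end JetDef

end JetPaper


namespace JetPaper

section ExteriorProducts

variable (k A B : Type*) [CommRing k] [CommRing A] [CommRing B] [Algebra k A] [Algebra k B]

/-- The canonical map `α : A ⊗[k] A → (A ⊗[k] B) ⊗[k] (A ⊗[k] B)`,
`a ⊗ a' ↦ (a ⊗ 1) ⊗ (a' ⊗ 1)`. -/
noncomputable def alphaMap : (A ⊗[k] A) →ₐ[k] ((A ⊗[k] B) ⊗[k] (A ⊗[k] B)) :=
  Algebra.TensorProduct.map Algebra.TensorProduct.includeLeft Algebra.TensorProduct.includeLeft

/-- The canonical map `β : B ⊗[k] B → (A ⊗[k] B) ⊗[k] (A ⊗[k] B)`,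
`b ⊗ b' ↦ (1 ⊗ b) ⊗ (1 ⊗ b')`. -/
noncomputable def betaMap : (B ⊗[k] B) →ₐ[k] ((A ⊗[k] B) ⊗[k] (A ⊗[k] B)) :=
  Algebra.TensorProduct.map Algebra.TensorProduct.includeRight Algebra.TensorProduct.includeRight

end ExteriorProducts

end JetPaper

lemma Ideal.sup_pow_add_add_one_le {R : Type*} [CommSemiring R] (I J : Ideal R) (n m : ℕ) :
    (I ⊔ J) ^ (n + m + 1) ≤ I ^ (n + 1) ⊔ J ^ (m + 1) := by
  rw [← Ideal.add_eq_sup, ← Ideal.add_eq_sup, add_pow, Ideal.sum_eq_sup]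
  refine Finset.sup_le fun i _ => ?_
  by_cases hi : n + 1 ≤ i
  · exact Ideal.mul_le_left.trans (Ideal.mul_le_left.trans
      ((Ideal.pow_le_pow_right hi).trans le_sup_left))
  · exact Ideal.mul_le_left.trans (Ideal.mul_le_right.trans
      ((Ideal.pow_le_pow_right (by omega)).trans le_sup_right))

lemma Ideal.span_image_union_image {R S T F G : Type*} [Semiring R] [Semiring S] [Semiring T]
    [FunLike F R T] [RingHomClass F R T] [FunLike G S T] [RingHomClass G S T]
    (f : F) (g : G) (I : Ideal R) (J : Ideal S) :
    Ideal.span (f '' I ∪ g '' J) = I.map f ⊔ J.map g :=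
  Ideal.span_union _ _

lemma Algebra.TensorProduct.lmul'_surjective (R S : Type*) [CommSemiring R] [CommSemiring S]
    [Algebra R S] : Function.Surjective (Algebra.TensorProduct.lmul' R : S ⊗[R] S →ₐ[R] S) :=
  fun s => ⟨s ⊗ₜ 1, by simp⟩

namespace JetPaper

section ExteriorProducts

open Algebra.TensorProduct

variable (k A B : Type*) [CommRing k] [CommRing A] [CommRing B] [Algebra k A] [Algebra k B]

noncomputable abbrev shuffle : (A ⊗[k] A) ⊗[k] (B ⊗[k] B) ≃ₐ[k] (A ⊗[k] B) ⊗[k] (A ⊗[k] B) :=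
  tensorTensorTensorComm k k k k A A B B

lemma alphaMap_eq_shuffle_comp_includeLeft :
    alphaMap k A B = (shuffle k A B).toAlgHom.comp includeLeft :=
  ext' fun a a' => by simp [alphaMap, shuffle, one_def]

lemma betaMap_eq_shuffle_comp_includeRight :
    betaMap k A B = (shuffle k A B).toAlgHom.comp includeRight :=
  ext' fun b b' => by simp [betaMap, shuffle, one_def]

lemma lmul'_comp_shuffle :
    (lmul' k : (A ⊗[k] B) ⊗[k] (A ⊗[k] B) →ₐ[k] A ⊗[k] B).comp (shuffle k A B) =
      map (lmul' k) (lmul' k) := by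
  ext <;> simp [shuffle, one_def]

/-- The multiplication of `A ⊗ B` is, up to the shuffle, the tensor product of the
multiplications of `A` and `B`, and the kernel of a tensor product of surjections is generated
by the two kernels. -/
lemma diagIdeal_tensorProduct_eq_sup :
    diagIdeal k (A ⊗[k] B) =
      (diagIdeal k A).map (alphaMap k A B) ⊔ (diagIdeal k B).map (betaMap k A B) := by
  have hker : (diagIdeal k (A ⊗[k] B)).comap (shuffle k A B) =
      (diagIdeal k A).map (includeLeft : _ →ₐ[k] (A ⊗[k] A) ⊗[k] (B ⊗[k] B)) ⊔
        (diagIdeal k B).map (includeRight : _ →ₐ[k] (A ⊗[k] A) ⊗[k] (B ⊗[k] B)) := by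
    change RingHom.ker ((lmul' k).comp (shuffle k A B).toAlgHom) = _
    rw [lmul'_comp_shuffle]
    exact map_ker _ _ (lmul'_surjective k A) (lmul'_surjective k B)
  rw [← Ideal.map_comap_of_surjective _ (shuffle k A B).surjective (diagIdeal k (A ⊗[k] B)),
    hker, Ideal.map_sup, alphaMap_eq_shuffle_comp_includeLeft,
    betaMap_eq_shuffle_comp_includeRight, ← Ideal.map_mapₐ, ← Ideal.map_mapₐ]
  rfl

/-- (i) The diagonal ideal of `A ⊗[k] B` is generated by
`α(I_{A/k}) ∪ β(I_{B/k})`; (ii) for every `N`, writing `J_N` for the ideal generated by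
`α(I_{A/k}^{N+1}) ∪ β(I_{B/k}^{N+1})`, one has
`I_{(A⊗B)/k}^{2N+1} ⊆ J_N ⊆ I_{(A⊗B)/k}^{N+1}`. -/
theorem diagIdeal_tensorProduct :
    diagIdeal k (A ⊗[k] B) =
      Ideal.span (⇑(alphaMap k A B) '' (diagIdeal k A : Set (A ⊗[k] A)) ∪
        ⇑(betaMap k A B) '' (diagIdeal k B : Set (B ⊗[k] B))) ∧
    ∀ N : ℕ,
      diagIdeal k (A ⊗[k] B) ^ (2 * N + 1) ≤
        Ideal.span
          (⇑(alphaMap k A B) '' ((diagIdeal k A ^ (N + 1) : Ideal (A ⊗[k] A)) : Set (A ⊗[k] A)) ∪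
            ⇑(betaMap k A B) '' ((diagIdeal k B ^ (N + 1) : Ideal (B ⊗[k] B)) : Set (B ⊗[k] B))) ∧
      Ideal.span
          (⇑(alphaMap k A B) '' ((diagIdeal k A ^ (N + 1) : Ideal (A ⊗[k] A)) : Set (A ⊗[k] A)) ∪
            ⇑(betaMap k A B) '' ((diagIdeal k B ^ (N + 1) : Ideal (B ⊗[k] B)) : Set (B ⊗[k] B))) ≤
        diagIdeal k (A ⊗[k] B) ^ (N + 1) := by
  simp only [Ideal.span_image_union_image, Ideal.map_pow]
  refine ⟨diagIdeal_tensorProduct_eq_sup k A B, fun N => ?_⟩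
  rw [diagIdeal_tensorProduct_eq_sup, two_mul]
  exact ⟨Ideal.sup_pow_add_add_one_le _ _ N N,
    sup_le (Ideal.pow_right_mono le_sup_left _) (Ideal.pow_right_mono le_sup_right _)⟩

end ExteriorProducts

end JetPaper
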